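/- arXiv:1405.4809 — 2 statements merged into one kernel-verified Lean document; each statement's English description precedes it below -/
import Mathlib

section
/- Let (X,d) be a metric space, let M be a multivalued mapping with dom(M) ⊆ X and values in X, and let f : dom(M) → ℝ satisfy f(x) − f(x') ≤ d(x',y) − d(x,y) for all (x,y) ∈ G(M) and all x' ∈ dom(M). Let S be a nonempty subset of dom(M). Then the function α : X → ℝ defined by α(x) = sup over s ∈ S, n ∈ ℕ, chains x_1 = s with {(x_i,y_i)}_{i=1}^n ⊆ G(M), of f(s) + Σ_{i=1}^{n−1} [ d(x_i,y_i) − d(x_{i+1},y_i) ] + d(x_n,y_n) − d(x,y_n), is the pointwise minimal 1-Lipschitz function h : X → ℝ which agrees with f on S and satisfies h(x) − h(x') ≤ d(x',y) − d(x,y) for all (x,y) ∈ G(M) and all x' ∈ X. -/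
noncomputable section

open scoped Classical

variable {X Y : Type*}

/-- The `c`-transform of `f : X → EReal`, a function on `Y`:
`f^c(y) = sup_{x ∈ X} (c(x,y) - f(x))`. The `c`-transform of a function on `Y` is obtained
by applying this to the swapped coupling `fun y x => c x y`. -/
def cTransform (c : X → Y → ℝ) (f : X → EReal) : Y → EReal :=
  fun y => ⨆ x, ((c x y : EReal) - f x)

/-- `f` is proper: it takes no value `-∞` (i.e. maps into `(-∞, +∞]`) and is finite somewhere. -/
def ProperFn (f : X → EReal) : Prop :=
  (∀ x, f x ≠ ⊥) ∧ ∃ x, f x ≠ ⊤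

/-- `f` is `c`-convex: it is proper and is the `c`-transform of some proper
`g : Y → (-∞, +∞]`. -/
def IsCConvex (c : X → Y → ℝ) (f : X → EReal) : Prop :=
  ProperFn f ∧ ∃ g : Y → EReal, ProperFn g ∧ f = cTransform (fun y x => c x y) g

/-- The `c`-subdifferential of `f`:
`∂_c f(x) = { y | ∀ x', f(x) + c(x',y) ≤ f(x') + c(x,y) }`. -/
def cSubdiff (c : X → Y → ℝ) (f : X → EReal) (x : X) : Set Y :=
  { y | ∀ x', f x + (c x' y : EReal) ≤ f x' + (c x y : EReal) }

/-- The domain of a multivalued mapping `M : X ⇉ Y`. -/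
def mapDom (M : X → Set Y) : Set X := { x | (M x).Nonempty }

/-- The inverse multivalued mapping `M⁻¹ : Y ⇉ X`. -/
def mapInv (M : X → Set Y) : Y → Set X := fun y => { x | y ∈ M x }

/-- The image `M(S) = ⋃_{s ∈ S} M(s)` of a set `S` under a multivalued mapping. -/
def mapImageOn (M : X → Set Y) (S : Set X) : Set Y := { y | ∃ s ∈ S, y ∈ M s }

/-- The image `Im(M) = ⋃_{x ∈ X} M(x)` of a multivalued mapping. -/
def mapIm (M : X → Set Y) : Set Y := { y | ∃ x, y ∈ M x }

/-- `f` is a `c`-antiderivative of `M`: `f` is proper and `G(M) ⊆ G(∂_c f)`. -/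
def IsCAntiderivative (c : X → Y → ℝ) (f : X → EReal) (M : X → Set Y) : Prop :=
  ProperFn f ∧ ∀ x y, y ∈ M x → y ∈ cSubdiff c f x

/-- The family `𝒜_{[c, f|_S, M]}` of all `c`-convex `c`-antiderivatives of `M`
which coincide with `f` on `S`. -/
def cFamily (c : X → Y → ℝ) (f : X → EReal) (S : Set X) (M : X → Set Y) :
    Set (X → EReal) :=
  { h | IsCConvex c h ∧ (∀ x y, y ∈ M x → y ∈ cSubdiff c h x) ∧ ∀ s ∈ S, h s = f s }

/-- The upper envelope `γ_{[c, f|_S, M]}`. -/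
def upperEnv (c : X → Y → ℝ) (f : X → EReal) (S : Set X) (M : X → Set Y) : X → EReal :=
  fun x => ⨆ h ∈ cFamily c f S M, h x

/-- The lower envelope `α_{[c, f|_S, M]}`. -/
def lowerEnv (c : X → Y → ℝ) (f : X → EReal) (S : Set X) (M : X → Set Y) : X → EReal :=
  fun x => ⨅ h ∈ cFamily c f S M, h x

/-- The indicator function `ι_A` (0 on `A`, `+∞` off `A`). -/
def indicatorE (A : Set X) : X → EReal := fun x => if x ∈ A then 0 else ⊤

/-- Rockafellar's function `R_{[c,M,s]}`: the supremum over `n ≥ 1` and chains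
`x_1 = s`, `x_{n+1} = x`, `{(x_i, y_i)}_{i=1}^n ⊆ G(M)` of
`Σ_{i=1}^n [c(x_{i+1}, y_i) - c(x_i, y_i)]` (0-indexed below). -/
def rockafellar (c : X → Y → ℝ) (M : X → Set Y) (s : X) : X → EReal := fun x =>
  ⨆ (n : ℕ) (_ : 0 < n) (xs : ℕ → X) (ys : ℕ → Y)
      (_ : xs 0 = s ∧ ∀ i < n, ys i ∈ M (xs i)),
    (((∑ i ∈ Finset.range n,
        (c (if i + 1 < n then xs (i + 1) else x) (ys i) - c (xs i) (ys i))) : ℝ) : EReal)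

/-- `M` is cyclically monotone of order `n` with respect to `c`: for any `n` pairs
`{(x_i, y_i)}_{i=1}^n ⊆ G(M)`, setting `x_{n+1} = x_1`,
`0 ≤ Σ_{i=1}^n [c(x_i,y_i) - c(x_{i+1},y_i)]` (0-indexed below, cyclically). -/
def IsNCMonotone (c : X → Y → ℝ) (M : X → Set Y) (n : ℕ) : Prop :=
  ∀ (xs : ℕ → X) (ys : ℕ → Y), (∀ i < n, ys i ∈ M (xs i)) →
    0 ≤ ∑ i ∈ Finset.range n, (c (xs i) (ys i) - c (xs ((i + 1) % n)) (ys i))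

/-- `M` is `c`-cyclically monotone: `n`-`c`-monotone for all `n`. -/
def IsCCyclicallyMonotone (c : X → Y → ℝ) (M : X → Set Y) : Prop :=
  ∀ n : ℕ, IsNCMonotone c M n

/-- The family of 1-Lipschitz `h : X → ℝ` which agree with `f` on `S` and satisfy
`h(x) - h(x') ≤ d(x',y) - d(x,y)` for all `(x,y) ∈ G(M)` and all `x' ∈ X`. -/
def constrainedLipFamily {X : Type*} [MetricSpace X] (M : X → Set X) (f : X → ℝ)
    (S : Set X) : Set (X → ℝ) :=
  { h | (∀ x y, |h x - h y| ≤ dist x y) ∧ (∀ s ∈ S, h s = f s) ∧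
      ∀ x y, y ∈ M x → ∀ x' : X, h x - h x' ≤ dist x' y - dist x y }

/-- The set of chain values defining `α_{[-d, f|_S, M]}(x)`: over `s ∈ S`, `n ≥ 1` and
chains `x_1 = s`, `{(x_i,y_i)}_{i=1}^n ⊆ G(M)`, the value
`f(s) + Σ_{i=1}^{n-1} [d(x_i,y_i) - d(x_{i+1},y_i)] + d(x_n,y_n) - d(x,y_n)`
(0-indexed below). -/
def alphaChainSet {X : Type*} [MetricSpace X] (M : X → Set X) (f : X → ℝ)
    (S : Set X) (x : X) : Set ℝ :=
  { r | ∃ (n : ℕ) (xs ys : ℕ → X), 0 < n ∧ xs 0 ∈ S ∧ (∀ i < n, ys i ∈ M (xs i)) ∧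
      r = f (xs 0) +
          (∑ i ∈ Finset.range (n - 1), (dist (xs i) (ys i) - dist (xs (i + 1)) (ys i))) +
          dist (xs (n - 1)) (ys (n - 1)) - dist x (ys (n - 1)) }

/-!
A chain value is `f(s)` plus a sum of increments `d(xᵢ,yᵢ) - d(xᵢ₊₁,yᵢ)`. Any function `g`
with `g(x) - g(x') ≤ d(x',y) - d(x,y)` on `G(M)` bounds these increments by `g(xᵢ₊₁) - g(xᵢ)`,
so by telescoping every chain value at `x` is at most `g(x)` (for `g = h` in the family), or at
most `f(x') + d(x',x)` (for `g = f`, which gives finiteness of `α` and `α = f` on `S`).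
Conversely, appending a link `(x,y)` to a chain ending at `x` shows that `α` itself satisfies the
constraint, and moving the endpoint of a chain shows that `α` is 1-Lipschitz.
-/

open Finset

lemma sum_range_le_sub_of_le_sub_succ {g a : ℕ → ℝ} {k : ℕ}
    (h : ∀ i < k, a i ≤ g (i + 1) - g i) : ∑ i ∈ range k, a i ≤ g k - g 0 := by
  rw [← sum_range_sub]
  exact sum_le_sum fun i hi => h i (mem_range.mp hi)

lemma csSup_le_csSup_add {A B : Set ℝ} {c : ℝ} (hA : A.Nonempty) (hB : BddAbove B)
    (h : ∀ r ∈ A, ∃ r' ∈ B, r ≤ r' + c) : sSup A ≤ sSup B + c :=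
  csSup_le hA fun r hr => by
    obtain ⟨r', hr', hle⟩ := h r hr
    linarith [le_csSup hB hr']

section AlphaChainSet

variable {X : Type*} [MetricSpace X] {M : X → Set X} {f : X → ℝ} {S : Set X}

lemma mem_alphaChainSet_iff {x : X} {r : ℝ} :
    r ∈ alphaChainSet M f S x ↔
      ∃ (n : ℕ) (xs ys : ℕ → X), xs 0 ∈ S ∧ (∀ i ≤ n, ys i ∈ M (xs i)) ∧
        r = f (xs 0) + (∑ i ∈ range n, (dist (xs i) (ys i) - dist (xs (i + 1)) (ys i))) +
          dist (xs n) (ys n) - dist x (ys n) := by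
  constructor
  · rintro ⟨n, xs, ys, hn, h0, hM, rfl⟩
    exact ⟨n - 1, xs, ys, h0, fun i hi => hM i (by omega), rfl⟩
  · rintro ⟨n, xs, ys, h0, hM, rfl⟩
    exact ⟨n + 1, xs, ys, n.succ_pos, h0, fun i hi => hM i (by omega), rfl⟩

lemma add_dist_sub_dist_mem_alphaChainSet {s y : X} (hs : s ∈ S) (hy : y ∈ M s) (x : X) :
    f s + dist s y - dist x y ∈ alphaChainSet M f S x :=
  mem_alphaChainSet_iff.mpr ⟨0, fun _ => s, fun _ => y, hs, fun _ _ => hy, by simp⟩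

/-- Appending the link `(x, y)` to a chain ending at `x`. -/
lemma add_dist_sub_dist_mem_alphaChainSet_of_mem {x y : X} (hy : y ∈ M x) {r : ℝ}
    (hr : r ∈ alphaChainSet M f S x) (x' : X) :
    r + dist x y - dist x' y ∈ alphaChainSet M f S x' := by
  obtain ⟨n, xs, ys, h0, hM, rfl⟩ := mem_alphaChainSet_iff.mp hr
  set xs' := Function.update xs (n + 1) x
  set ys' := Function.update ys (n + 1) y
  have hxs : ∀ i ≤ n, xs' i = xs i := fun i hi => Function.update_of_ne (by omega) _ _
  have hys : ∀ i ≤ n, ys' i = ys i := fun i hi => Function.update_of_ne (by omega) _ _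
  refine mem_alphaChainSet_iff.mpr ⟨n + 1, xs', ys', ?_, fun i hi => ?_, ?_⟩
  · rwa [hxs 0 n.zero_le]
  · rcases Nat.lt_or_eq_of_le hi with hi | rfl
    · rw [hxs i (by omega), hys i (by omega)]
      exact hM i (by omega)
    · simpa [xs', ys'] using hy
  · have hsum : ∑ i ∈ range n, (dist (xs' i) (ys' i) - dist (xs' (i + 1)) (ys' i)) =
        ∑ i ∈ range n, (dist (xs i) (ys i) - dist (xs (i + 1)) (ys i)) :=
      sum_congr rfl fun i hi => by
        have hi : i < n := mem_range.mp hi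
        rw [hxs i hi.le, hxs (i + 1) hi, hys i hi.le]
    simp only [sum_range_succ, hsum, hxs 0 n.zero_le, hxs n le_rfl, hys n le_rfl, xs', ys',
      Function.update_self]
    ring

lemma exists_mem_alphaChainSet_le_add_dist {a : X} {r : ℝ} (hr : r ∈ alphaChainSet M f S a)
    (b : X) : ∃ r' ∈ alphaChainSet M f S b, r ≤ r' + dist a b := by
  obtain ⟨n, xs, ys, hn, h0, hM, rfl⟩ := hr
  refine ⟨_, ⟨n, xs, ys, hn, h0, hM, rfl⟩, ?_⟩
  linarith [dist_triangle b a (ys (n - 1)), dist_comm a b]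

lemma le_add_dist_of_mem_alphaChainSet (g : X → ℝ) {T : Set X} (hT : mapDom M ⊆ T)
    (hgS : ∀ s ∈ S, f s ≤ g s)
    (hg : ∀ x y, y ∈ M x → ∀ x' ∈ T, g x - g x' ≤ dist x' y - dist x y)
    {x : X} {r : ℝ} (hr : r ∈ alphaChainSet M f S x) {x' : X} (hx' : x' ∈ T) :
    r ≤ g x' + dist x' x := by
  obtain ⟨n, xs, ys, h0, hM, rfl⟩ := mem_alphaChainSet_iff.mp hr
  have htel := sum_range_le_sub_of_le_sub_succ (g := fun i => g (xs i))
    (a := fun i => dist (xs i) (ys i) - dist (xs (i + 1)) (ys i)) (k := n) fun i hi =>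
    by linarith [hg _ _ (hM i hi.le) _ (hT ⟨ys (i + 1), hM (i + 1) hi⟩)]
  have hlast := hg _ _ (hM n le_rfl) x' hx'
  have := hgS _ h0
  linarith [dist_triangle x' x (ys n)]

end AlphaChainSet

/-- under the hypotheses on `f` and `M`, the function
`α(x) = sup alphaChainSet M f S x` is a well-defined real-valued function and is the
pointwise minimal 1-Lipschitz function agreeing with `f` on `S` and satisfying
`h(x) - h(x') ≤ d(x',y) - d(x,y)` for all `(x,y) ∈ G(M)`, `x' ∈ X`. -/
theorem statement18 {X : Type*} [MetricSpace X] (M : X → Set X) (f : X → ℝ)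
    (hf : ∀ x y, y ∈ M x → ∀ x' ∈ mapDom M, f x - f x' ≤ dist x' y - dist x y)
    (S : Set X) (hS : S.Nonempty) (hSdom : S ⊆ mapDom M) :
    (∀ x, (alphaChainSet M f S x).Nonempty ∧ BddAbove (alphaChainSet M f S x)) ∧
      (fun x => sSup (alphaChainSet M f S x)) ∈ constrainedLipFamily M f S ∧
      ∀ h ∈ constrainedLipFamily M f S, ∀ x, sSup (alphaChainSet M f S x) ≤ h x := by
  obtain ⟨s₀, hs₀⟩ := hS
  obtain ⟨y₀, hy₀⟩ := hSdom hs₀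
  have hne : ∀ x, (alphaChainSet M f S x).Nonempty := fun x =>
    ⟨_, add_dist_sub_dist_mem_alphaChainSet hs₀ hy₀ x⟩
  have hle_f : ∀ x, ∀ r ∈ alphaChainSet M f S x, ∀ x' ∈ mapDom M, r ≤ f x' + dist x' x :=
    fun x r hr x' hx' =>
      le_add_dist_of_mem_alphaChainSet f subset_rfl (fun _ _ => le_rfl) hf hr hx'
  have hbdd : ∀ x, BddAbove (alphaChainSet M f S x) := fun x =>
    ⟨f s₀ + dist s₀ x, fun r hr => hle_f x r hr s₀ (hSdom hs₀)⟩
  have hlip : ∀ a b, sSup (alphaChainSet M f S a) ≤ sSup (alphaChainSet M f S b) + dist a b :=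
    fun a b => csSup_le_csSup_add (hne a) (hbdd b) fun _ hr =>
      exists_mem_alphaChainSet_le_add_dist hr b
  refine ⟨fun x => ⟨hne x, hbdd x⟩, ⟨fun a b => ?_, fun s hs => ?_, fun x y hy x' => ?_⟩, ?_⟩
  · rw [abs_sub_le_iff]
    constructor <;> linarith [hlip a b, hlip b a, dist_comm a b]
  · obtain ⟨y, hy⟩ := hSdom hs
    refine le_antisymm (csSup_le (hne s) fun r hr => by simpa using hle_f s r hr s (hSdom hs)) ?_
    simpa using le_csSup (hbdd s) (add_dist_sub_dist_mem_alphaChainSet hs hy s)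
  · have := csSup_le_csSup_add (c := dist x' y - dist x y) (hne x) (hbdd x') fun r hr =>
      ⟨_, add_dist_sub_dist_mem_alphaChainSet_of_mem hy hr x', by linarith⟩
    linarith
  · intro h hh x
    refine csSup_le (hne x) fun r hr => ?_
    simpa using le_add_dist_of_mem_alphaChainSet h (Set.subset_univ _) (fun s hs => (hh.2.1 s hs).ge)
      (fun x y hy x' _ => hh.2.2 x y hy x') hr (Set.mem_univ x)
end
end

section
/- Let (X,d) be a metric space, let M be a multivalued mapping with dom(M) ⊆ X and values in X, and let f : dom(M) → ℝ satisfy f(x) − f(x') ≤ d(x',y) − d(x,y) for all (x,y) ∈ G(M) and all x' ∈ dom(M). Let S be a nonempty subset of dom(M). Then the function γ : X → ℝ defined by γ(x) = inf over s ∈ S, n ∈ ℕ, chains x_1 = s with {(x_i,y_i)}_{i=1}^n ⊆ G(M), of f(s) + Σ_{i=1}^{n−1} [ d(x_i,y_{i+1}) − d(x_{i+1},y_{i+1}) ] + d(x_n,x), is the pointwise maximal 1-Lipschitz function h : X → ℝ which agrees with f on S and satisfies h(x) − h(x') ≤ d(x',y) − d(x,y) for all (x,y) ∈ G(M) and all x'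 ∈ X. -/
noncomputable section

open scoped Classical

variable {X Y : Type*}

/-- The set of chain values defining `γ_{[-d, f|_S, M]}(x)`: over `s ∈ S`, `n ≥ 1` and
chains `x_1 = s`, `{(x_i,y_i)}_{i=1}^n ⊆ G(M)`, the value
`f(s) + Σ_{i=1}^{n-1} [d(x_i,y_{i+1}) - d(x_{i+1},y_{i+1})] + d(x_n,x)`
(0-indexed below). -/
def gammaChainSet {X : Type*} [MetricSpace X] (M : X → Set X) (f : X → ℝ)
    (S : Set X) (x : X) : Set ℝ :=
  { r | ∃ (n : ℕ) (xs ys : ℕ → X), 0 < n ∧ xs 0 ∈ S ∧ (∀ i < n, ys i ∈ M (xs i)) ∧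
      r = f (xs 0) +
          (∑ i ∈ Finset.range (n - 1),
            (dist (xs i) (ys (i + 1)) - dist (xs (i + 1)) (ys (i + 1)))) +
          dist (xs (n - 1)) x }

/-! Along a chain `(x_i, y_i)` in `G(M)`, the inequality `h(x_{i+1}) - h(x_i) ≤ d(x_i, y_{i+1}) -
d(x_{i+1}, y_{i+1})` telescopes, so every chain value is at least `h(x_1) + h(x) - h(x_n)` and
hence at least `h(x)` for any admissible `h`; the same telescoping with `f` shows the chain values
are bounded below. Conversely, moving the endpoint `x` changes a chain value by at most the
distance moved, which makes `γ` 1-Lipschitz, and appending a pair `(x, y)` to a chain ending at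
`x'` yields the inequality `γ(x) - γ(x') ≤ d(x', y) - d(x, y)`. -/

theorem csInf_le_csInf_add {A B : Set ℝ} {c : ℝ} (hA : A.Nonempty) (hB : BddBelow B)
    (h : ∀ a ∈ A, ∃ b ∈ B, b ≤ a + c) : sInf B ≤ sInf A + c := by
  rw [← sub_le_iff_le_add]
  refine le_csInf hA fun a ha => ?_
  obtain ⟨b, hb, hba⟩ := h a ha
  linarith [csInf_le hB hb]

theorem sub_le_sum_range_of_sub_le {a c : ℕ → ℝ} {m : ℕ} (h : ∀ i < m, a (i + 1) - a i ≤ c i) :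
    a m - a 0 ≤ ∑ i ∈ Finset.range m, c i := by
  rw [← Finset.sum_range_sub a]
  exact Finset.sum_le_sum fun i hi => h i (Finset.mem_range.mp hi)

section GammaChain

variable [MetricSpace X] {M : X → Set X} {f : X → ℝ} {S : Set X}

theorem mem_gammaChainSet_iff {x : X} {r : ℝ} :
    r ∈ gammaChainSet M f S x ↔ ∃ (m : ℕ) (xs ys : ℕ → X), xs 0 ∈ S ∧
      (∀ i ≤ m, ys i ∈ M (xs i)) ∧
      r = f (xs 0) +
        ∑ i ∈ Finset.range m, (dist (xs i) (ys (i + 1)) - dist (xs (i + 1)) (ys (i + 1))) +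
        dist (xs m) x := by
  constructor
  · rintro ⟨n, xs, ys, hn, hxs0, hys, rfl⟩
    obtain ⟨m, rfl⟩ := Nat.exists_eq_add_of_lt hn
    exact ⟨m, xs, ys, hxs0, fun i hi => hys i (by omega), by simp⟩
  · rintro ⟨m, xs, ys, hxs0, hys, rfl⟩
    exact ⟨m + 1, xs, ys, m.succ_pos, hxs0, fun i hi => hys i (by omega), by simp⟩

theorem add_dist_mem_gammaChainSet {s y : X} (hs : s ∈ S) (hy : y ∈ M s) (x : X) :
    f s + dist s x ∈ gammaChainSet M f S x :=
  mem_gammaChainSet_iff.mpr ⟨0, fun _ => s, fun _ => y, hs, fun _ _ => hy, by simp⟩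

theorem gammaChainSet_nonempty (hS : S.Nonempty) (hSdom : S ⊆ mapDom M) (x : X) :
    (gammaChainSet M f S x).Nonempty := by
  obtain ⟨s, hs⟩ := hS
  obtain ⟨y, hy⟩ := hSdom hs
  exact ⟨_, add_dist_mem_gammaChainSet hs hy x⟩

section Antiderivative

variable (hf : ∀ x y, y ∈ M x → ∀ x' ∈ mapDom M, f x - f x' ≤ dist x' y - dist x y)
include hf

theorem exists_mem_mapDom_add_dist_le {x : X} {r : ℝ} (hr : r ∈ gammaChainSet M f S x) :
    ∃ z ∈ mapDom M, f z + dist z x ≤ r := by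
  obtain ⟨m, xs, ys, -, hys, rfl⟩ := mem_gammaChainSet_iff.mp hr
  have hchain := sub_le_sum_range_of_sub_le (a := fun i => f (xs i)) fun i hi =>
    hf _ _ (hys (i + 1) hi) (xs i) ⟨ys i, hys i hi.le⟩
  exact ⟨xs m, ⟨ys m, hys m le_rfl⟩, by linarith⟩

theorem le_of_mem_gammaChainSet {a b x : X} (hab : b ∈ M a) {r : ℝ}
    (hr : r ∈ gammaChainSet M f S x) : f a + dist a b - dist x b ≤ r := by
  obtain ⟨z, hz, hzr⟩ := exists_mem_mapDom_add_dist_le hf hr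
  have hfa := hf a b hab z hz
  linarith [dist_triangle z x b]

theorem bddBelow_gammaChainSet (hM : (mapDom M).Nonempty) (x : X) :
    BddBelow (gammaChainSet M f S x) := by
  obtain ⟨a, b, hab⟩ := hM
  exact ⟨_, fun r hr => le_of_mem_gammaChainSet hf hab hr⟩

theorem sInf_gammaChainSet_eq_of_mem {s : X} (hs : s ∈ S) (hsdom : s ∈ mapDom M) :
    sInf (gammaChainSet M f S s) = f s := by
  obtain ⟨b, hb⟩ := hsdom
  have hmem : f s + dist s s ∈ gammaChainSet M f S s := add_dist_mem_gammaChainSet hs hb s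
  rw [dist_self, add_zero] at hmem
  refine le_antisymm (csInf_le ⟨_, fun r hr => le_of_mem_gammaChainSet hf hb hr⟩ hmem) ?_
  refine le_csInf ⟨_, hmem⟩ fun r hr => ?_
  simpa using le_of_mem_gammaChainSet hf hb hr

end Antiderivative

theorem exists_mem_gammaChainSet_le_add_dist {x y : X} {r : ℝ}
    (hr : r ∈ gammaChainSet M f S y) : ∃ r' ∈ gammaChainSet M f S x, r' ≤ r + dist y x := by
  obtain ⟨m, xs, ys, hxs0, hys, rfl⟩ := mem_gammaChainSet_iff.mp hr
  exact ⟨_, mem_gammaChainSet_iff.mpr ⟨m, xs, ys, hxs0, hys, rfl⟩, by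
    linarith [dist_triangle (xs m) y x]⟩

theorem exists_mem_gammaChainSet_le_sub_dist {x x' y : X} (hy : y ∈ M x) {r : ℝ}
    (hr : r ∈ gammaChainSet M f S x') :
    ∃ r' ∈ gammaChainSet M f S x, r' ≤ r + dist x' y - dist x y := by
  obtain ⟨m, xs, ys, hxs0, hys, rfl⟩ := mem_gammaChainSet_iff.mp hr
  let xs' : ℕ → X := fun i => if i ≤ m then xs i else x
  let ys' : ℕ → X := fun i => if i ≤ m then ys i else y
  have hys' : ∀ i ≤ m + 1, ys' i ∈ M (xs' i) := by
    intro i hi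
    rcases Nat.lt_or_eq_of_le hi with hi | rfl
    · simpa [xs', ys', Nat.le_of_lt_succ hi] using hys i (Nat.le_of_lt_succ hi)
    · simpa [xs', ys'] using hy
  have hsum : ∑ i ∈ Finset.range m,
      (dist (xs' i) (ys' (i + 1)) - dist (xs' (i + 1)) (ys' (i + 1))) =
      ∑ i ∈ Finset.range m, (dist (xs i) (ys (i + 1)) - dist (xs (i + 1)) (ys (i + 1))) :=
    Finset.sum_congr rfl fun i hi => by
      have hi : i + 1 ≤ m := Finset.mem_range.mp hi
      simp [xs', ys', hi, hi.trans' i.le_succ]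
  refine ⟨_, mem_gammaChainSet_iff.mpr ⟨m + 1, xs', ys', by simpa [xs'] using hxs0, hys', rfl⟩,
    ?_⟩
  simp only [Finset.sum_range_succ, hsum]
  simp only [xs', ys', le_rfl, zero_le, if_true, Nat.not_succ_le_self, if_false, dist_self,
    add_zero]
  linarith [dist_triangle (xs m) x' y]

theorem sInf_gammaChainSet_le_add_dist {x y : X} (hne : (gammaChainSet M f S y).Nonempty)
    (hbdd : BddBelow (gammaChainSet M f S x)) :
    sInf (gammaChainSet M f S x) ≤ sInf (gammaChainSet M f S y) + dist y x :=
  csInf_le_csInf_add hne hbdd fun _ hr => exists_mem_gammaChainSet_le_add_dist hr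

theorem sInf_gammaChainSet_sub_le {x x' y : X} (hy : y ∈ M x)
    (hne : (gammaChainSet M f S x').Nonempty) (hbdd : BddBelow (gammaChainSet M f S x)) :
    sInf (gammaChainSet M f S x) - sInf (gammaChainSet M f S x') ≤ dist x' y - dist x y := by
  have := csInf_le_csInf_add (c := dist x' y - dist x y) hne hbdd fun _ hr => by
    simpa only [add_sub_assoc] using exists_mem_gammaChainSet_le_sub_dist hy hr
  linarith

theorem le_of_mem_constrainedLipFamily {h : X → ℝ} (hh : h ∈ constrainedLipFamily M f S)
    {x : X} {r : ℝ} (hr : r ∈ gammaChainSet M f S x) : h x ≤ r := by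
  obtain ⟨hLip, hagree, hsub⟩ := hh
  obtain ⟨m, xs, ys, hxs0, hys, rfl⟩ := mem_gammaChainSet_iff.mp hr
  have hchain := sub_le_sum_range_of_sub_le (a := fun i => h (xs i)) fun i hi =>
    hsub _ _ (hys (i + 1) hi) (xs i)
  have hend := (abs_sub_le_iff.mp (hLip x (xs m))).1
  rw [hagree _ hxs0] at hchain
  rw [dist_comm] at hend
  linarith

end GammaChain

/-- under the hypotheses on `f` and `M`, the function
`γ(x) = inf gammaChainSet M f S x` is a well-defined real-valued function and is the
pointwise maximal 1-Lipschitz function agreeing with `f` on `S` and satisfying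
`h(x) - h(x') ≤ d(x',y) - d(x,y)` for all `(x,y) ∈ G(M)`, `x' ∈ X`. -/
theorem statement19 {X : Type*} [MetricSpace X] (M : X → Set X) (f : X → ℝ)
    (hf : ∀ x y, y ∈ M x → ∀ x' ∈ mapDom M, f x - f x' ≤ dist x' y - dist x y)
    (S : Set X) (hS : S.Nonempty) (hSdom : S ⊆ mapDom M) :
    (∀ x, (gammaChainSet M f S x).Nonempty ∧ BddBelow (gammaChainSet M f S x)) ∧
      (fun x => sInf (gammaChainSet M f S x)) ∈ constrainedLipFamily M f S ∧
      ∀ h ∈ constrainedLipFamily M f S, ∀ x, h x ≤ sInf (gammaChainSet M f S x) := by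
  have hne := gammaChainSet_nonempty (f := f) hS hSdom
  have hbdd := bddBelow_gammaChainSet (S := S) hf (hS.mono hSdom)
  refine ⟨fun x => ⟨hne x, hbdd x⟩, ⟨fun x y => ?_, fun s hs => ?_, fun x y hy x' => ?_⟩, ?_⟩
  · have hxy := sInf_gammaChainSet_le_add_dist (hne y) (hbdd x)
    have hyx := sInf_gammaChainSet_le_add_dist (hne x) (hbdd y)
    rw [dist_comm] at hxy
    exact abs_sub_le_iff.mpr ⟨by linarith, by linarith⟩
  · exact sInf_gammaChainSet_eq_of_mem hf hs (hSdom hs)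
  · exact sInf_gammaChainSet_sub_le hy (hne x') (hbdd x)
  · exact fun h hh x => le_csInf (hne x) fun _ hr => le_of_mem_constrainedLipFamily hh hr
end
end
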